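/- If H(P(H,L) | L) = 0 for the uniform distribution on a finite type Hty × Lty, then P satisfies noninterference: P(h₁,l) = P(h₂,l) for all h₁, h₂ ∈ Hty, l ∈ Lty. -/

import Mathlib

open Finset Real

/-- Probability mass of the event `X = x` under distribution `p` on a finite sample space. -/
noncomputable def mass {Ω α : Type*} [Fintype Ω] [DecidableEq α]
    (p : Ω → ℝ) (X : Ω → α) (x : α) : ℝ :=
  ∑ ω ∈ Finset.univ.filter (fun ω => X ω = x), p ω

/-- Shannon entropy of a finitely supported random variable (convention `0 * log 0 = 0`
since `Real.log 0 = 0`). -/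
noncomputable def entropy {Ω α : Type*} [Fintype Ω] [Fintype α] [DecidableEq α]
    (p : Ω → ℝ) (X : Ω → α) : ℝ :=
  -∑ x, mass p X x * Real.log (mass p X x)

/-- Conditional Shannon entropy `H(X | L) = ∑ l p(l) H(X | L = l)`, written via the joint mass. -/
noncomputable def condEntropy {Ω α β : Type*} [Fintype Ω] [Fintype α] [Fintype β]
    [DecidableEq α] [DecidableEq β] (p : Ω → ℝ) (X : Ω → α) (L : Ω → β) : ℝ :=
  -∑ l, ∑ x, mass p (fun ω => (X ω, L ω)) (x, l) *
      Real.log (mass p (fun ω => (X ω, L ω)) (x, l) / mass p L l)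

/-!
Every summand of `-H(X | L)` has the form `q * log (q / m)` with `q` a joint mass and `m ≥ q`
the corresponding marginal mass, so it is nonpositive; a vanishing sum forces each summand to
vanish, hence `q = m` whenever `q > 0`. Under full support this says that the whole fibre
`{L = L ω}` lies in `{X = X ω}`, i.e. `X` is a function of `L`.
-/

lemma mul_log_div_nonpos {q m : ℝ} (hq : 0 ≤ q) (hqm : q ≤ m) : q * log (q / m) ≤ 0 :=
  mul_nonpos_of_nonneg_of_nonpos hq <|
    log_nonpos (div_nonneg hq (hq.trans hqm)) (div_le_one_of_le₀ hqm (hq.trans hqm))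

lemma eq_of_mul_log_div_eq_zero {q m : ℝ} (hq : 0 < q) (hqm : q ≤ m)
    (h : q * log (q / m) = 0) : q = m := by
  have hm : 0 < m := hq.trans_le hqm
  have hlog : log (q / m) = 0 := (mul_eq_zero.mp h).resolve_left hq.ne'
  exact (div_eq_one_iff_eq hm.ne').mp (eq_one_of_pos_of_log_eq_zero (div_pos hq hm) hlog)

section ZeroConditionalEntropy

variable {Ω α β : Type*} [Fintype Ω] [DecidableEq α] [DecidableEq β] {p : Ω → ℝ}

lemma filter_pair_eq_subset_filter_right_eq (X : Ω → α) (L : Ω → β) (x : α) (l : β) :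
    univ.filter (fun ω => (X ω, L ω) = (x, l)) ⊆ univ.filter (fun ω => L ω = l) :=
  monotone_filter_right _ fun _ _ hω => (Prod.mk.inj hω).2

lemma mass_nonneg (hp : ∀ ω, 0 ≤ p ω) (X : Ω → α) (x : α) : 0 ≤ mass p X x :=
  sum_nonneg fun ω _ => hp ω

lemma mass_pos (hp : ∀ ω, 0 < p ω) (X : Ω → α) (ω : Ω) : 0 < mass p X (X ω) :=
  sum_pos' (fun ω _ => (hp ω).le) ⟨ω, mem_filter.mpr ⟨mem_univ ω, rfl⟩, hp ω⟩

lemma mass_pair_le_mass_right (hp : ∀ ω, 0 ≤ p ω) (X : Ω → α) (L : Ω → β) (x : α) (l : β) :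
    mass p (fun ω => (X ω, L ω)) (x, l) ≤ mass p L l :=
  sum_le_sum_of_subset_of_nonneg (filter_pair_eq_subset_filter_right_eq X L x l)
    fun ω _ _ => hp ω

lemma mass_pair_mul_log_eq_zero_of_condEntropy_eq_zero [Fintype α] [Fintype β]
    (hp : ∀ ω, 0 ≤ p ω) {X : Ω → α} {L : Ω → β} (h : condEntropy p X L = 0) (x : α) (l : β) :
    mass p (fun ω => (X ω, L ω)) (x, l) *
      log (mass p (fun ω => (X ω, L ω)) (x, l) / mass p L l) = 0 := by
  have hterm : ∀ l x, mass p (fun ω => (X ω, L ω)) (x, l) *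
      log (mass p (fun ω => (X ω, L ω)) (x, l) / mass p L l) ≤ 0 := fun l x =>
    mul_log_div_nonpos (mass_nonneg hp _ _) (mass_pair_le_mass_right hp X L x l)
  rw [condEntropy, neg_eq_zero,
    sum_eq_zero_iff_of_nonpos fun l _ => sum_nonpos fun x _ => hterm l x] at h
  exact (sum_eq_zero_iff_of_nonpos fun x _ => hterm l x).mp (h l (mem_univ l)) x (mem_univ x)

lemma mass_pair_eq_mass_right_of_condEntropy_eq_zero [Fintype α] [Fintype β]
    (hp : ∀ ω, 0 < p ω) {X : Ω → α} {L : Ω → β} (h : condEntropy p X L = 0) (ω : Ω) :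
    mass p (fun ω => (X ω, L ω)) (X ω, L ω) = mass p L (L ω) :=
  eq_of_mul_log_div_eq_zero (mass_pos hp _ ω) (mass_pair_le_mass_right (fun ω => (hp ω).le) ..)
    (mass_pair_mul_log_eq_zero_of_condEntropy_eq_zero (fun ω => (hp ω).le) h ..)

theorem eq_of_condEntropy_eq_zero [Fintype α] [Fintype β]
    (hp : ∀ ω, 0 < p ω) {X : Ω → α} {L : Ω → β} (h : condEntropy p X L = 0) {ω ω' : Ω}
    (hL : L ω' = L ω) : X ω' = X ω := by
  by_contra hX
  have hlt : mass p (fun ω => (X ω, L ω)) (X ω, L ω) < mass p L (L ω) :=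
    sum_lt_sum_of_subset (filter_pair_eq_subset_filter_right_eq X L _ _) (i := ω')
      (mem_filter.mpr ⟨mem_univ _, hL⟩)
      (fun hω' => hX (Prod.mk.inj (mem_filter.mp hω').2).1) (hp ω') fun ω _ _ => (hp ω).le
  exact hlt.ne (mass_pair_eq_mass_right_of_condEntropy_eq_zero hp h ω)

end ZeroConditionalEntropy

theorem zero_leakage_uniform_noninterference_general {Hty Lty Lty' : Type*}
    [Fintype Hty] [Fintype Lty] [Fintype Lty']
    [DecidableEq Lty] [DecidableEq Lty']
    (P : Hty × Lty → Lty')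
    (hzero : condEntropy (fun _ : Hty × Lty => (1 : ℝ) / (Fintype.card (Hty × Lty)))
        (fun x => P x) Prod.snd = 0) :
    ∀ h₁ h₂ : Hty, ∀ l : Lty, P (h₁, l) = P (h₂, l) := by
  intro h₁ h₂ l
  have hne : Nonempty (Hty × Lty) := ⟨(h₁, l)⟩
  have huniform_pos : ∀ ω : Hty × Lty, 0 < (1 : ℝ) / Fintype.card (Hty × Lty) := fun _ =>
    one_div_pos.mpr (Nat.cast_pos.mpr Fintype.card_pos)
  exact (eq_of_condEntropy_eq_zero huniform_pos hzero (ω := (h₁, l)) (ω' := (h₂, l)) rfl).symm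

/-- Zero leakage under the uniform distribution on `Hty × Lty` implies noninterference. -/
theorem zero_leakage_uniform_noninterference {Hty Lty Lty' : Type*}
    [Fintype Hty] [Fintype Lty] [Fintype Lty']
    [Nonempty Hty] [Nonempty Lty]
    [DecidableEq Hty] [DecidableEq Lty] [DecidableEq Lty']
    (P : Hty × Lty → Lty')
    (hzero : condEntropy (fun _ : Hty × Lty => (1 : ℝ) / (Fintype.card (Hty × Lty)))
        (fun x => P x) Prod.snd = 0) :
    ∀ h₁ h₂ : Hty, ∀ l : Lty, P (h₁, l) = P (h₂, l) :=
  zero_leakage_uniform_noninterference_general P hzero
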